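/- arXiv:1910.12184 — 5 statements merged into one kernel-verified Lean document; each statement's English description precedes it below -/
import Mathlib

section
/- Let t be a random index in {1,…,n} distributed according to P. Then the variance of X_t satisfies Var[X_t] ≤ ||v_k||² ||v_m||², where ||v_k||² = Σ_{i=1}^n ||v_k(i)||² and ||v_m||² = Σ_{i=1}^n ||v_m(i)||². -/
/-!
Since the weights `P` sum to one, the variance is at most the second moment `Σ P(t) X_t²`.
Each term of the second moment is `⟨v_k(t), v_m(t)⟩² / P(t) ≤ (‖v_k(t)‖ ‖v_m(t)‖)² / P(t) = P(t) S²`,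
so the second moment is at most `S²`, and `S² ≤ ‖v_k‖² ‖v_m‖²` is Cauchy–Schwarz in `ℝⁿ`.
-/

open Finset

theorem Finset.sum_mul_sub_sq_eq {ι : Type*} (s : Finset ι) (p x : ι → ℝ)
    (hp : ∑ i ∈ s, p i = 1) :
    ∑ i ∈ s, p i * (x i - ∑ j ∈ s, p j * x j) ^ 2
      = ∑ i ∈ s, p i * x i ^ 2 - (∑ j ∈ s, p j * x j) ^ 2 := by
  set μ := ∑ j ∈ s, p j * x j with hμ
  calc ∑ i ∈ s, p i * (x i - μ) ^ 2
      = ∑ i ∈ s, (p i * x i ^ 2 - 2 * μ * (p i * x i) + μ ^ 2 * p i) :=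
        sum_congr rfl fun i _ => by ring
    _ = ∑ i ∈ s, p i * x i ^ 2 - μ ^ 2 := by
        rw [sum_add_distrib, sum_sub_distrib, ← mul_sum, ← mul_sum, ← hμ, hp]
        ring

theorem Finset.sum_mul_sub_sq_le_sum_mul_sq {ι : Type*} (s : Finset ι) (p x : ι → ℝ)
    (hp : ∑ i ∈ s, p i = 1) :
    ∑ i ∈ s, p i * (x i - ∑ j ∈ s, p j * x j) ^ 2 ≤ ∑ i ∈ s, p i * x i ^ 2 := by
  rw [s.sum_mul_sub_sq_eq p x hp]
  exact sub_le_self _ (sq_nonneg _)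

theorem mul_sq_ite_div_le_mul_sq {p c S : ℝ} (hp : 0 ≤ p) (hc : |c| ≤ p * S) :
    p * (if 0 < p then c / p else 0) ^ 2 ≤ p * S ^ 2 := by
  rcases hp.eq_or_lt with rfl | hp
  · simp
  have hc2 : c ^ 2 ≤ (p * S) ^ 2 := sq_le_sq' (abs_le.mp hc).1 (abs_le.mp hc).2
  calc p * (if 0 < p then c / p else 0) ^ 2 = c ^ 2 / p := by
        rw [if_pos hp]; field_simp
    _ ≤ (p * S) ^ 2 / p := by gcongr
    _ = p * S ^ 2 := by field_simp

theorem fmc_variance_le_general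
    {n d : ℕ}
    (vk vm : Fin n → EuclideanSpace ℝ (Fin d))
    (S : ℝ) (hS : S = ∑ j, ‖vk j‖ * ‖vm j‖) (hSpos : 0 < S)
    (P : Fin n → ℝ) (hP : ∀ t, P t = ‖vk t‖ * ‖vm t‖ / S)
    (X : Fin n → ℝ)
    (hX : ∀ t, X t = if 0 < P t then (inner ℝ (vk t) (vm t) : ℝ) / P t else 0) :
    ∑ t, P t * (X t - ∑ s, P s * X s) ^ 2
      ≤ (∑ i, ‖vk i‖ ^ 2) * (∑ i, ‖vm i‖ ^ 2) := by
  have hPsum : ∑ t, P t = 1 := by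
    simp only [hP]
    rw [← sum_div, ← hS, div_self hSpos.ne']
  have hsecond : ∀ t, P t * X t ^ 2 ≤ P t * S ^ 2 := fun t => by
    have hPS : P t * S = ‖vk t‖ * ‖vm t‖ := by rw [hP t, div_mul_cancel₀ _ hSpos.ne']
    rw [hX t]
    exact mul_sq_ite_div_le_mul_sq (hP t ▸ by positivity) (hPS ▸ abs_real_inner_le_norm _ _)
  calc ∑ t, P t * (X t - ∑ s, P s * X s) ^ 2
      ≤ ∑ t, P t * X t ^ 2 := univ.sum_mul_sub_sq_le_sum_mul_sq P X hPsum
    _ ≤ ∑ t, P t * S ^ 2 := sum_le_sum fun t _ => hsecond t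
    _ = S ^ 2 := by rw [← sum_mul, hPsum, one_mul]
    _ ≤ (∑ i, ‖vk i‖ ^ 2) * (∑ i, ‖vm i‖ ^ 2) :=
      hS ▸ sum_mul_sq_le_sq_mul_sq univ (fun i => ‖vk i‖) (fun i => ‖vm i‖)

/-- The variance of the importance-sampling random variable `X_t` satisfies
`Var[X_t] = Σ_t P(t) (X_t − E[X_t])² ≤ ‖v_k‖² ‖v_m‖²`, where
`‖v_k‖² = Σ_i ‖v_k(i)‖²` and `‖v_m‖² = Σ_i ‖v_m(i)‖²`. -/
theorem fmc_variance_le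
    {n d : ℕ} (hn : 0 < n) (hd : 0 < d)
    (vk vm : Fin n → EuclideanSpace ℝ (Fin d))
    (S : ℝ) (hS : S = ∑ j, ‖vk j‖ * ‖vm j‖) (hSpos : 0 < S)
    (P : Fin n → ℝ) (hP : ∀ t, P t = ‖vk t‖ * ‖vm t‖ / S)
    (X : Fin n → ℝ)
    (hX : ∀ t, X t = if 0 < P t then (inner ℝ (vk t) (vm t) : ℝ) / P t else 0) :
    ∑ t, P t * (X t - ∑ s, P s * X s) ^ 2
      ≤ (∑ i, ‖vk i‖ ^ 2) * (∑ i, ‖vm i‖ ^ 2) :=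
  fmc_variance_le_general vk vm S hS hSpos P hP X hX
end

section
/- Let t_1,…,t_c be c i.i.d. random indices in {1,…,n}, each distributed according to P, and let H̃_km = (1/c) Σ_{j=1}^c X_{t_j}. Then the mean squared error of the estimator satisfies E[|H_km − H̃_km|²] = Var[H̃_km] ≤ (1/c) ||v_k||² ||v_m||². -/
private lemma sum_split {n c : ℕ} (f : (Fin (c+1) → Fin n) → ℝ) :
    ∑ t : Fin (c+1) → Fin n, f t = ∑ a : Fin n, ∑ t : Fin c → Fin n, f (Fin.cons a t) := by
  rw [← ((Fin.consEquiv (fun _ : Fin (c+1) => Fin n))).sum_comp, Fintype.sum_prod_type]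
  rfl

private lemma prod_one {n : ℕ} (w : Fin n → ℝ) (hw : ∑ i, w i = 1) :
    ∀ c : ℕ, ∑ t : Fin c → Fin n, ∏ j, w (t j) = 1 := by
  intro c
  induction c with
  | zero => simp
  | succ c ih =>
    rw [sum_split]
    simp only [Fin.prod_univ_succ, Fin.cons_zero, Fin.cons_succ]
    rw [← hw]
    refine Finset.sum_congr rfl fun a _ => ?_
    rw [← Finset.mul_sum, ih, mul_one]

private lemma mean_sum {n : ℕ} (w g : Fin n → ℝ) (hw : ∑ i, w i = 1) :
    ∀ c : ℕ, ∑ t : Fin c → Fin n, (∏ j, w (t j)) * (∑ j, g (t j))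
      = c * ∑ i, w i * g i := by
  intro c
  induction c with
  | zero => simp
  | succ c ih =>
    rw [sum_split]
    simp only [Fin.prod_univ_succ, Fin.cons_zero, Fin.cons_succ, Fin.sum_univ_succ]
    have : ∀ a : Fin n,
        ∑ t : Fin c → Fin n, (w a * ∏ j, w (t j)) * (g a + ∑ j, g (t j))
        = w a * g a * (∑ t : Fin c → Fin n, ∏ j, w (t j))
          + w a * (∑ t : Fin c → Fin n, (∏ j, w (t j)) * (∑ j, g (t j))) := by
      intro a
      rw [Finset.mul_sum, Finset.mul_sum, ← Finset.sum_add_distrib]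
      refine Finset.sum_congr rfl fun t _ => by ring
    simp only [this, prod_one w hw, ih, mul_one]
    rw [Finset.sum_add_distrib, ← Finset.sum_mul, hw]
    push_cast
    ring

private lemma sq_sum {n : ℕ} (w g : Fin n → ℝ) (hw : ∑ i, w i = 1) :
    ∀ c : ℕ, ∑ t : Fin c → Fin n, (∏ j, w (t j)) * (∑ j, g (t j)) ^ 2
      = c * (∑ i, w i * g i ^ 2) + c * (c - 1) * (∑ i, w i * g i) ^ 2 := by
  intro c
  induction c with
  | zero => simp
  | succ c ih =>
    rw [sum_split]
    simp only [Fin.prod_univ_succ, Fin.cons_zero, Fin.cons_succ, Fin.sum_univ_succ]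
    have : ∀ a : Fin n,
        ∑ t : Fin c → Fin n, (w a * ∏ j, w (t j)) * (g a + ∑ j, g (t j)) ^ 2
        = w a * g a ^ 2 * (∑ t : Fin c → Fin n, ∏ j, w (t j))
          + 2 * (w a * g a) * (∑ t : Fin c → Fin n, (∏ j, w (t j)) * (∑ j, g (t j)))
          + w a * (∑ t : Fin c → Fin n, (∏ j, w (t j)) * (∑ j, g (t j)) ^ 2) := by
      intro a
      rw [Finset.mul_sum, Finset.mul_sum, Finset.mul_sum, ← Finset.sum_add_distrib,
        ← Finset.sum_add_distrib]
      refine Finset.sum_congr rfl fun t _ => by ring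
    simp only [this, prod_one w hw, mean_sum w g hw, ih, mul_one]
    rw [Finset.sum_add_distrib, Finset.sum_add_distrib, ← Finset.sum_mul,
      ← Finset.sum_mul, ← Finset.mul_sum, hw]
    push_cast
    ring


/-- Mean squared error of the `c`-sample estimator `H̃_km = (1/c) Σ_j X_{t_j}` over i.i.d.
samples `t_1,…,t_c ~ P`: it equals the variance of `H̃_km` and is at most
`(1/c) ‖v_k‖² ‖v_m‖²`. Expectations are written as sums over `(Fin c → Fin n)` weighted by
the product probabilities `Π_j P(t_j)`. -/
theorem fmc_mse_le
    {n d c : ℕ} (hn : 0 < n) (hd : 0 < d) (hc : 0 < c)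
    (vk vm : Fin n → EuclideanSpace ℝ (Fin d))
    (S : ℝ) (hS : S = ∑ j, ‖vk j‖ * ‖vm j‖) (hSpos : 0 < S)
    (P : Fin n → ℝ) (hP : ∀ t, P t = ‖vk t‖ * ‖vm t‖ / S)
    (X : Fin n → ℝ)
    (hX : ∀ t, X t = if 0 < P t then (inner ℝ (vk t) (vm t) : ℝ) / P t else 0)
    (Hkm : ℝ) (hH : Hkm = ∑ i, (inner ℝ (vk i) (vm i) : ℝ))
    (est : (Fin c → Fin n) → ℝ)
    (hest : ∀ t, est t = (1 / (c : ℝ)) * ∑ j, X (t j)) :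
    (∑ t : Fin c → Fin n, (∏ j, P (t j)) * (Hkm - est t) ^ 2
        = ∑ t : Fin c → Fin n, (∏ j, P (t j)) *
            (est t - ∑ s : Fin c → Fin n, (∏ j, P (s j)) * est s) ^ 2) ∧
      ∑ t : Fin c → Fin n, (∏ j, P (t j)) * (Hkm - est t) ^ 2
        ≤ (1 / (c : ℝ)) * ((∑ i, ‖vk i‖ ^ 2) * (∑ i, ‖vm i‖ ^ 2)) := by
  have hcpos : (0:ℝ) < c := by exact_mod_cast hc
  have hc' : (c:ℝ) ≠ 0 := ne_of_gt hcpos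
  have hw : ∑ i, P i = 1 := by
    simp only [hP]
    rw [← Finset.sum_div, ← hS, div_self hSpos.ne']
  have hPnn : ∀ t, 0 ≤ P t := fun t => by
    rw [hP]; positivity
  set m := ∑ i, P i * X i with hmdef
  set M := ∑ i, P i * X i ^ 2 with hMdef
  have hm : m = Hkm := by
    rw [hmdef, hH]
    refine Finset.sum_congr rfl fun t _ => ?_
    rw [hX]
    by_cases h : 0 < P t
    · rw [if_pos h]; field_simp
    · rw [if_neg h, mul_zero]
      have hP0 : P t = 0 := le_antisymm (not_lt.1 h) (hPnn t)
      have ha : ‖vk t‖ * ‖vm t‖ = 0 := by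
        have h2 := hP t
        rw [hP0] at h2
        have := (div_eq_zero_iff.1 h2.symm)
        rcases this with h3 | h3
        · exact h3
        · exact absurd h3 hSpos.ne'
      have habs : |(inner ℝ (vk t) (vm t) : ℝ)| ≤ ‖vk t‖ * ‖vm t‖ :=
        abs_real_inner_le_norm (vk t) (vm t)
      rw [ha] at habs
      exact (abs_eq_zero.1 (le_antisymm habs (abs_nonneg _))).symm
  have hE0 := prod_one P hw c
  have hE1 := mean_sum P X hw c
  have hE2 := sq_sum P X hw c
  have hEst : (∑ s : Fin c → Fin n, (∏ j, P (s j)) * est s) = Hkm := by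
    have h1 : ∑ s : Fin c → Fin n, (∏ j, P (s j)) * est s
        = (1/(c:ℝ)) * ∑ s : Fin c → Fin n, (∏ j, P (s j)) * (∑ j, X (s j)) := by
      rw [Finset.mul_sum]
      exact Finset.sum_congr rfl fun s _ => by rw [hest]; ring
    rw [h1, hE1, ← hm]
    field_simp
    exact hmdef.symm
  have hLHS : ∑ t : Fin c → Fin n, (∏ j, P (t j)) * (Hkm - est t) ^ 2
      = (M - Hkm ^ 2) / c := by
    have expand : ∀ t : Fin c → Fin n, (∏ j, P (t j)) * (Hkm - est t) ^ 2
        = Hkm ^ 2 * (∏ j, P (t j))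
          + (-2 * Hkm / c) * ((∏ j, P (t j)) * (∑ j, X (t j)))
          + (1 / (c:ℝ) ^ 2) * ((∏ j, P (t j)) * (∑ j, X (t j)) ^ 2) := by
      intro t
      rw [hest]
      field_simp
      ring
    rw [Finset.sum_congr rfl fun t _ => expand t]
    rw [Finset.sum_add_distrib, Finset.sum_add_distrib, ← Finset.mul_sum, ← Finset.mul_sum,
      ← Finset.mul_sum, hE0, hE1, hE2, ← hmdef, ← hMdef, hm]
    field_simp
    ring
  have hM2 : M ≤ S ^ 2 := by
    calc M ≤ ∑ i, (‖vk i‖ * ‖vm i‖) * S := by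
            refine Finset.sum_le_sum fun i _ => ?_
            by_cases h : 0 < P i
            · have haS : ‖vk i‖ * ‖vm i‖ = P i * S := by
                rw [hP]; field_simp
              rw [hX, if_pos h]
              have hinner : ((inner ℝ (vk i) (vm i) : ℝ)) ^ 2 ≤ (‖vk i‖ * ‖vm i‖) ^ 2 := by
                have h5 := abs_real_inner_le_norm (vk i) (vm i)
                nlinarith [abs_nonneg ((inner ℝ (vk i) (vm i) : ℝ)),
                  sq_abs ((inner ℝ (vk i) (vm i) : ℝ))]
              have heq : P i * ((inner ℝ (vk i) (vm i) : ℝ) / P i) ^ 2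
                  = (inner ℝ (vk i) (vm i) : ℝ) ^ 2 / P i := by
                field_simp
              rw [heq, div_le_iff₀ h]
              calc (inner ℝ (vk i) (vm i) : ℝ) ^ 2 ≤ (‖vk i‖ * ‖vm i‖) ^ 2 := hinner
                _ = ‖vk i‖ * ‖vm i‖ * S * P i := by rw [haS]; ring
            · rw [hX, if_neg h]
              have h0 : P i * (0:ℝ) ^ 2 = 0 := by ring
              rw [h0]
              positivity
      _ = S ^ 2 := by rw [← Finset.sum_mul, ← hS]; ring
  have hCS : S ^ 2 ≤ (∑ i, ‖vk i‖ ^ 2) * (∑ i, ‖vm i‖ ^ 2) := by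
    rw [hS]
    exact Finset.sum_mul_sq_le_sq_mul_sq _ _ _
  constructor
  · rw [hEst]
    exact Finset.sum_congr rfl fun t _ => by ring
  · rw [hLHS]
    have h6 : M - Hkm ^ 2 ≤ (∑ i, ‖vk i‖ ^ 2) * (∑ i, ‖vm i‖ ^ 2) := by
      nlinarith [sq_nonneg Hkm]
    calc (M - Hkm ^ 2) / c ≤ ((∑ i, ‖vk i‖ ^ 2) * (∑ i, ‖vm i‖ ^ 2)) / c := by
          gcongr
      _ = (1 / (c:ℝ)) * ((∑ i, ‖vk i‖ ^ 2) * (∑ i, ‖vm i‖ ^ 2)) := by ring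
end

section
/- Let t_1,…,t_c be c i.i.d. random indices in {1,…,n}, each distributed according to P, and let H̃_km = (1/c) Σ_{j=1}^c X_{t_j}. Then the expected absolute error satisfies E[|H_km − H̃_km|] ≤ (1/√c) ||v_k|| ||v_m||. -/
/-- Expected absolute error of the `c`-sample estimator `H̃_km = (1/c) Σ_j X_{t_j}`:
`E[|H_km − H̃_km|] ≤ (1/√c) ‖v_k‖ ‖v_m‖`, where `‖v_k‖ = √(Σ_i ‖v_k(i)‖²)`. -/
theorem fmc_expected_abs_error_le
    {n d c : ℕ} (hn : 0 < n) (hd : 0 < d) (hc : 0 < c)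
    (vk vm : Fin n → EuclideanSpace ℝ (Fin d))
    (S : ℝ) (hS : S = ∑ j, ‖vk j‖ * ‖vm j‖) (hSpos : 0 < S)
    (P : Fin n → ℝ) (hP : ∀ t, P t = ‖vk t‖ * ‖vm t‖ / S)
    (X : Fin n → ℝ)
    (hX : ∀ t, X t = if 0 < P t then (inner ℝ (vk t) (vm t) : ℝ) / P t else 0)
    (Hkm : ℝ) (hH : Hkm = ∑ i, (inner ℝ (vk i) (vm i) : ℝ))
    (est : (Fin c → Fin n) → ℝ)
    (hest : ∀ t, est t = (1 / (c : ℝ)) * ∑ j, X (t j)) :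
    ∑ t : Fin c → Fin n, (∏ j, P (t j)) * |Hkm - est t|
      ≤ (1 / Real.sqrt c) *
          (Real.sqrt (∑ i, ‖vk i‖ ^ 2) * Real.sqrt (∑ i, ‖vm i‖ ^ 2)) := by
  have hc' : (0:ℝ) < (c:ℝ) := by exact_mod_cast hc
  have hPnn : ∀ a, 0 ≤ P a := by
    intro a; rw [hP]; positivity
  have hPsum : ∑ a, P a = 1 := by
    simp only [hP]
    rw [← Finset.sum_div, ← hS, div_self hSpos.ne']
  have hinner0 : ∀ a, ¬ 0 < P a → (inner ℝ (vk a) (vm a) : ℝ) = 0 := by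
    intro a h
    have hPa : P a = 0 := le_antisymm (not_lt.1 h) (hPnn a)
    have hnv : ‖vk a‖ * ‖vm a‖ = 0 := by
      have h2 := (hP a).symm.trans hPa
      rcases div_eq_zero_iff.1 h2 with h3 | h3
      · exact h3
      · exact absurd h3 hSpos.ne'
    have h4 := abs_real_inner_le_norm (vk a) (vm a)
    rw [hnv] at h4
    exact abs_eq_zero.1 (le_antisymm h4 (abs_nonneg _))
  have hPX : ∀ a, P a * X a = (inner ℝ (vk a) (vm a) : ℝ) := by
    intro a
    by_cases h : 0 < P a
    · rw [hX a, if_pos h]; field_simp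
    · rw [hX a, if_neg h, mul_zero, hinner0 a h]
  have hmean : ∑ a, P a * X a = Hkm := by
    simp_rw [hPX]; exact hH.symm
  have hPX2 : ∀ a, P a * X a ^ 2 ≤ S * (‖vk a‖ * ‖vm a‖) := by
    intro a
    by_cases h : 0 < P a
    · have hnv : 0 < ‖vk a‖ * ‖vm a‖ := by
        by_contra hle
        have : ‖vk a‖ * ‖vm a‖ = 0 :=
          le_antisymm (not_lt.1 hle) (mul_nonneg (norm_nonneg _) (norm_nonneg _))
        rw [hP a, this, zero_div] at h; exact lt_irrefl 0 h
      have hXa : X a = (inner ℝ (vk a) (vm a) : ℝ) / P a := by rw [hX a, if_pos h]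
      have hsq : (inner ℝ (vk a) (vm a) : ℝ) ^ 2 ≤ (‖vk a‖ * ‖vm a‖) ^ 2 := by
        have := abs_real_inner_le_norm (vk a) (vm a)
        calc (inner ℝ (vk a) (vm a) : ℝ) ^ 2 = |(inner ℝ (vk a) (vm a) : ℝ)| ^ 2 := (sq_abs _).symm
          _ ≤ (‖vk a‖ * ‖vm a‖) ^ 2 := by
              apply pow_le_pow_left₀ (abs_nonneg _) this
      have h1 : P a * X a ^ 2 = (inner ℝ (vk a) (vm a) : ℝ) ^ 2 / P a := by
        rw [hXa]; field_simp
      rw [h1, hP a]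
      rw [div_div_eq_mul_div]
      rw [div_le_iff₀ hnv]
      calc (inner ℝ (vk a) (vm a) : ℝ) ^ 2 * S ≤ (‖vk a‖ * ‖vm a‖) ^ 2 * S := by
            exact mul_le_mul_of_nonneg_right hsq hSpos.le
        _ = S * (‖vk a‖ * ‖vm a‖) * (‖vk a‖ * ‖vm a‖) := by ring
    · rw [hX a, if_neg h]
      simp only [ne_eq, OfNat.ofNat_ne_zero, not_false_eq_true, zero_pow, mul_zero]
      positivity
  have hsum2 : ∑ a, P a * X a ^ 2 ≤ S ^ 2 := by
    calc ∑ a, P a * X a ^ 2 ≤ ∑ a, S * (‖vk a‖ * ‖vm a‖) :=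
          Finset.sum_le_sum fun a _ => hPX2 a
      _ = S * ∑ a, ‖vk a‖ * ‖vm a‖ := by rw [Finset.mul_sum]
      _ = S ^ 2 := by rw [← hS]; ring
  set V : ℝ := ∑ a, P a * (Hkm - X a) ^ 2 with hV
  have hZmean : ∑ a, P a * (Hkm - X a) = 0 := by
    have : ∀ a, P a * (Hkm - X a) = Hkm * P a - P a * X a := fun a => by ring
    simp_rw [this, Finset.sum_sub_distrib, ← Finset.mul_sum, hPsum, hmean, mul_one, sub_self]
  have hVnn : 0 ≤ V := Finset.sum_nonneg fun a _ => mul_nonneg (hPnn a) (sq_nonneg _)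
  have hVle : V ≤ S ^ 2 := by
    have hexp : ∀ a, P a * (Hkm - X a) ^ 2
        = P a * X a ^ 2 - 2 * Hkm * (P a * X a) + Hkm ^ 2 * P a := fun a => by ring
    have : V = (∑ a, P a * X a ^ 2) - Hkm ^ 2 := by
      rw [hV]
      simp_rw [hexp, Finset.sum_add_distrib, Finset.sum_sub_distrib, ← Finset.mul_sum,
        hPsum, hmean, mul_one]
      ring
    nlinarith [sq_nonneg Hkm]
  -- product-sum identity
  have hprodsum : ∀ g : Fin c → Fin n → ℝ,
      ∑ t : Fin c → Fin n, ∏ i, g i (t i) = ∏ i, ∑ a, g i a := by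
    intro g
    rw [Finset.prod_univ_sum, Fintype.piFinset_univ]
  have hwsum : ∑ t : Fin c → Fin n, ∏ i, P (t i) = 1 := by
    rw [hprodsum fun _ a => P a]
    simp [hPsum]
  have hcross : ∀ j j' : Fin c,
      ∑ t : Fin c → Fin n, (∏ i, P (t i)) * ((Hkm - X (t j)) * (Hkm - X (t j')))
        = if j = j' then V else 0 := by
    intro j j'
    have key : ∀ t : Fin c → Fin n,
        (∏ i, P (t i)) * ((Hkm - X (t j)) * (Hkm - X (t j')))
        = ∏ i, (P (t i) * ((if i = j then Hkm - X (t i) else 1) *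
            (if i = j' then Hkm - X (t i) else 1))) := by
      intro t
      rw [Finset.prod_mul_distrib, Finset.prod_mul_distrib,
        Finset.prod_ite_eq' Finset.univ j (fun i => Hkm - X (t i)),
        Finset.prod_ite_eq' Finset.univ j' (fun i => Hkm - X (t i))]
      simp
    simp_rw [key]
    have h1 := hprodsum (fun i a => P a * ((if i = j then Hkm - X a else 1) *
        (if i = j' then Hkm - X a else 1)))
    rw [h1]
    by_cases h : j = j'
    · subst h
      rw [if_pos rfl]
      have hfac : ∀ i : Fin c,
          (∑ a, P a * ((if i = j then Hkm - X a else 1) * (if i = j then Hkm - X a else 1)))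
          = if i = j then V else 1 := by
        intro i
        by_cases hi : i = j
        · simp only [hi, eq_self_iff_true, if_true, ite_true, hV]
          congr 1; funext a; ring
        · simp [hi, hPsum]
      simp_rw [hfac]
      rw [Finset.prod_ite_eq' Finset.univ j (fun _ => V)]
      simp
    · rw [if_neg h]
      apply Finset.prod_eq_zero (Finset.mem_univ j)
      simp only [if_pos rfl, if_neg h, mul_one]
      exact hZmean
  have hD : ∀ t : Fin c → Fin n,
      Hkm - est t = (1/(c:ℝ)) * ∑ j, (Hkm - X (t j)) := by
    intro t
    rw [hest, Finset.sum_sub_distrib, Finset.sum_const, Finset.card_univ, Fintype.card_fin,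
      nsmul_eq_mul]
    field_simp
  have hsecond : ∑ t : Fin c → Fin n, (∏ i, P (t i)) * (Hkm - est t) ^ 2 = V / c := by
    have expand : ∀ t : Fin c → Fin n, (∏ i, P (t i)) * (Hkm - est t) ^ 2
        = (1/(c:ℝ))^2 * ∑ j, ∑ j', (∏ i, P (t i)) * ((Hkm - X (t j)) * (Hkm - X (t j'))) := by
      intro t
      rw [hD, mul_pow, sq (∑ j, (Hkm - X (t j))), Finset.sum_mul_sum]
      rw [Finset.mul_sum, Finset.mul_sum]
      simp_rw [Finset.mul_sum]
      congr 1; funext j; congr 1; funext j'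
      ring
    simp_rw [expand]
    rw [← Finset.mul_sum, Finset.sum_comm]
    have hswap : ∀ j : Fin c, (∑ t : Fin c → Fin n, ∑ j' : Fin c,
        (∏ i, P (t i)) * ((Hkm - X (t j)) * (Hkm - X (t j'))))
        = ∑ j' : Fin c, ∑ t : Fin c → Fin n,
          (∏ i, P (t i)) * ((Hkm - X (t j)) * (Hkm - X (t j'))) :=
      fun j => Finset.sum_comm
    simp_rw [hswap, hcross]
    simp only [Finset.sum_ite_eq, Finset.mem_univ, if_true, Finset.sum_const,
      Finset.card_univ, Fintype.card_fin, nsmul_eq_mul]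
    field_simp
  have hw : ∀ t : Fin c → Fin n, 0 ≤ ∏ i, P (t i) :=
    fun t => Finset.prod_nonneg fun i _ => hPnn _
  have habs2 : (∑ t : Fin c → Fin n, (∏ i, P (t i)) * |Hkm - est t|) ^ 2 ≤ V / c := by
    have hcs := Finset.sum_mul_sq_le_sq_mul_sq Finset.univ
      (fun t : Fin c → Fin n => Real.sqrt (∏ i, P (t i)))
      (fun t : Fin c → Fin n => Real.sqrt (∏ i, P (t i)) * |Hkm - est t|)
    have e1 : ∀ t : Fin c → Fin n, Real.sqrt (∏ i, P (t i)) *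
        (Real.sqrt (∏ i, P (t i)) * |Hkm - est t|) = (∏ i, P (t i)) * |Hkm - est t| := by
      intro t; rw [← mul_assoc, Real.mul_self_sqrt (hw t)]
    have e2 : ∀ t : Fin c → Fin n, Real.sqrt (∏ i, P (t i)) ^ 2 = ∏ i, P (t i) :=
      fun t => Real.sq_sqrt (hw t)
    have e3 : ∀ t : Fin c → Fin n, (Real.sqrt (∏ i, P (t i)) * |Hkm - est t|) ^ 2
        = (∏ i, P (t i)) * (Hkm - est t) ^ 2 := by
      intro t; rw [mul_pow, e2, sq_abs]
    simp_rw [e1, e2, e3] at hcs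
    rw [hwsum, one_mul, hsecond] at hcs
    exact hcs
  have hnn : 0 ≤ ∑ t : Fin c → Fin n, (∏ i, P (t i)) * |Hkm - est t| :=
    Finset.sum_nonneg fun t _ => mul_nonneg (hw t) (abs_nonneg _)
  have hsc : 0 < Real.sqrt c := Real.sqrt_pos.2 hc'
  have hstep1 : ∑ t : Fin c → Fin n, (∏ i, P (t i)) * |Hkm - est t| ≤ S / Real.sqrt c := by
    have hb : 0 ≤ S / Real.sqrt c := by positivity
    have h1 : (∑ t : Fin c → Fin n, (∏ i, P (t i)) * |Hkm - est t|) ^ 2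
        ≤ (S / Real.sqrt c) ^ 2 := by
      have h2 : (S / Real.sqrt c) ^ 2 = S ^ 2 / c := by
        rw [div_pow, Real.sq_sqrt hc'.le]
      rw [h2]
      calc (∑ t : Fin c → Fin n, (∏ i, P (t i)) * |Hkm - est t|) ^ 2 ≤ V / c := habs2
        _ ≤ S ^ 2 / c := by gcongr
    nlinarith [h1, hnn, hb]
  have hCS2 : S ≤ Real.sqrt (∑ i, ‖vk i‖ ^ 2) * Real.sqrt (∑ i, ‖vm i‖ ^ 2) := by
    have h := Finset.sum_mul_sq_le_sq_mul_sq Finset.univ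
      (fun i : Fin n => ‖vk i‖) (fun i : Fin n => ‖vm i‖)
    have h2 : S ^ 2 ≤ (∑ i, ‖vk i‖ ^ 2) * (∑ i, ‖vm i‖ ^ 2) := by rw [hS]; exact h
    calc S = Real.sqrt (S ^ 2) := (Real.sqrt_sq hSpos.le).symm
      _ ≤ Real.sqrt ((∑ i, ‖vk i‖ ^ 2) * (∑ i, ‖vm i‖ ^ 2)) := Real.sqrt_le_sqrt h2
      _ = Real.sqrt (∑ i, ‖vk i‖ ^ 2) * Real.sqrt (∑ i, ‖vm i‖ ^ 2) :=
          Real.sqrt_mul (by positivity) _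
  calc ∑ t : Fin c → Fin n, (∏ j, P (t j)) * |Hkm - est t| ≤ S / Real.sqrt c := hstep1
    _ = (1 / Real.sqrt c) * S := by ring
    _ ≤ (1 / Real.sqrt c) * (Real.sqrt (∑ i, ‖vk i‖ ^ 2) * Real.sqrt (∑ i, ‖vm i‖ ^ 2)) :=
        mul_le_mul_of_nonneg_left hCS2 (by positivity)
end

section
/- Let δ ∈ (0,1) and set η = 1 + √(8 log(1/δ)). Let t_1,…,t_c be c i.i.d. random indices in {1,…,n}, each distributed according to P, and let H̃_km = (1/c) Σ_{j=1}^c X_{t_j}. Then with probability at least 1 − δ, |H_km − H̃_km| ≤ (η/√c) ||v_k|| ||v_m||. -/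
/-!
`H̃_km` is the mean of `c` independent copies of `X`, whose mean under `P` is `H_km`
(importance sampling) and which takes values in `[-S, S]`, where
`S = ∑ ‖v_k(i)‖ ‖v_m(i)‖ ≤ ‖v_k‖ ‖v_m‖` by Cauchy–Schwarz. With `ε = η ‖v_k‖ ‖v_m‖ / √c` we
thus have `c ε² ≥ η² S²`. For `δ ≥ 1/2`, Chebyshev's inequality bounds the failure probability
by `S² / (c ε²) ≤ 1 / η² ≤ δ`; for `δ < 1/2`, Hoeffding's inequality bounds it by
`2 exp (-c ε² / (2 S²)) ≤ 2 exp (-η² / 2) ≤ δ`.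
-/

open Finset MeasureTheory ProbabilityTheory Real

noncomputable def confidenceFactor (δ : ℝ) : ℝ := 1 + √(8 * log (1 / δ))

lemma one_le_confidenceFactor (δ : ℝ) : 1 ≤ confidenceFactor δ :=
  le_add_of_nonneg_right (sqrt_nonneg _)

lemma inv_sq_confidenceFactor_le {δ : ℝ} (hδ : 1 / 2 ≤ δ) (hδ1 : δ ≤ 1) :
    (confidenceFactor δ ^ 2)⁻¹ ≤ δ := by
  have hδ0 : 0 < δ := by linarith
  set L := log (1 / δ)
  have hL0 : 0 ≤ L := log_nonneg (by rw [le_div_iff₀ hδ0]; linarith)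
  have hL1 : L ≤ 0.7 := by
    have : L ≤ log 2 := log_le_log (by positivity) (by rw [div_le_iff₀ hδ0]; linarith)
    linarith [log_two_lt_d9]
  have hδL : 1 - L ≤ δ := by
    have := add_one_le_exp (-L)
    rw [exp_neg, exp_log (by positivity), one_div, inv_inv] at this
    linarith
  have hs := sq_sqrt (show 0 ≤ 8 * L by positivity)
  have hsL : 0 ≤ √(8 * L) * (1 - L) := mul_nonneg (sqrt_nonneg _) (by linarith)
  rw [inv_le_iff_one_le_mul₀ (by have := one_le_confidenceFactor δ; positivity), confidenceFactor]
  -- `(1 + s)² (1 - L) = 1 + 2 s (1 - L) + L (7 - 8 L)` for `s = √(8 L)`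
  nlinarith [mul_le_mul_of_nonneg_left hδL (sq_nonneg (1 + √(8 * L)))]

lemma two_mul_exp_neg_sq_confidenceFactor_le {δ : ℝ} (hδ0 : 0 < δ) (hδ : δ ≤ 1 / 2) :
    2 * exp (-(confidenceFactor δ ^ 2 / 2)) ≤ δ := by
  set L := log (1 / δ)
  have hL : log 2 ≤ L := log_le_log two_pos (by rw [le_div_iff₀ hδ0]; linarith)
  have hlog2 : 0 < log 2 := log_pos one_lt_two
  have hs := sq_sqrt (show 0 ≤ 8 * L by linarith)
  have hη : 8 * L ≤ confidenceFactor δ ^ 2 := by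
    rw [confidenceFactor]; nlinarith [sqrt_nonneg (8 * L)]
  calc 2 * exp (-(confidenceFactor δ ^ 2 / 2)) = exp (log 2 - confidenceFactor δ ^ 2 / 2) := by
        rw [exp_sub, exp_log two_pos, exp_neg]; ring
    _ ≤ exp (-L) := exp_le_exp.2 (by linarith)
    _ = δ := by rw [exp_neg, exp_log (by positivity), one_div, inv_inv]

section SampleMean

variable {Ω : Type*} {f : Ω → ℝ} {c : ℕ}

noncomputable def sampleMean (f : Ω → ℝ) (ω : Fin c → Ω) : ℝ := (1 / (c : ℝ)) * ∑ j, f (ω j)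

lemma sampleMean_neg (ω : Fin c → Ω) : sampleMean (-f) ω = -sampleMean f ω := by
  simp [sampleMean]

lemma sampleMean_sub_const (hc : 0 < c) (m : ℝ) (ω : Fin c → Ω) :
    sampleMean f ω - m = (1 / (c : ℝ)) * ∑ j, (f (ω j) - m) := by
  simp only [sampleMean, sum_sub_distrib, sum_const, card_univ, Fintype.card_fin, nsmul_eq_mul]
  field_simp

variable [MeasurableSpace Ω] {ν : Measure Ω} [IsProbabilityMeasure ν] {a b ε : ℝ}

lemma integral_sampleMean (hc : 0 < c) (hf : Integrable f ν) :
    ∫ ω, sampleMean f ω ∂(Measure.pi fun _ : Fin c => ν) = ν[f] := by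
  have hfj : ∀ j : Fin c, Integrable (fun ω : Fin c → Ω => f (ω j)) (Measure.pi fun _ => ν) :=
    fun j => integrable_comp_eval hf
  simp only [sampleMean]
  rw [integral_const_mul, integral_finsetSum _ fun j _ => hfj j]
  simp only [fun j => integral_comp_eval (μ := fun _ : Fin c => ν) (i := j) hf.aestronglyMeasurable,
    sum_const, card_univ, Fintype.card_fin, nsmul_eq_mul]
  field_simp

lemma variance_sampleMean (hf : MemLp f 2 ν) :
    Var[sampleMean f; Measure.pi fun _ : Fin c => ν] = Var[f; ν] / c := by
  have hsum := variance_sum_pi (μ := fun _ : Fin c => ν) (X := fun _ => f) fun _ => hf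
  rw [Finset.sum_fn] at hsum
  unfold sampleMean
  rw [variance_const_mul, hsum]
  simp only [sum_const, card_univ, Fintype.card_fin, nsmul_eq_mul]
  field_simp

lemma measureReal_abs_sampleMean_sub_integral_ge_le_div (hf : AEMeasurable f ν)
    (hab : ∀ᵐ ω ∂ν, f ω ∈ Set.Icc a b) (hc : 0 < c) (hε : 0 < ε) :
    (Measure.pi fun _ : Fin c => ν).real {ω | ε ≤ |sampleMean f ω - ν[f]|}
      ≤ ((b - a) / 2) ^ 2 / (c * ε ^ 2) := by
  have hfL : MemLp f 2 ν := memLp_of_bounded hab hf.aestronglyMeasurable 2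
  have hmeanL : MemLp (sampleMean f) 2 (Measure.pi fun _ : Fin c => ν) := by
    unfold sampleMean
    exact (memLp_finsetSum _ fun j _ =>
      hfL.comp_measurePreserving (measurePreserving_eval (fun _ : Fin c => ν) j)).const_mul _
  have hcheb := meas_ge_le_variance_div_sq hmeanL hε
  rw [integral_sampleMean hc (hfL.integrable one_le_two), variance_sampleMean hfL] at hcheb
  have hvar : Var[f; ν] ≤ ((b - a) / 2) ^ 2 := variance_le_sq_of_bounded hab hf
  calc _ ≤ Var[f; ν] / c / ε ^ 2 := by
        rw [measureReal_def]
        exact ENNReal.toReal_le_of_le_ofReal (by have := variance_nonneg f ν; positivity) hcheb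
    _ ≤ _ := by
        rw [div_div]
        gcongr

lemma measureReal_sampleMean_sub_integral_ge_le_exp (hf : AEMeasurable f ν)
    (hab : ∀ᵐ ω ∂ν, f ω ∈ Set.Icc a b) (hc : 0 < c) (hε : 0 ≤ ε) :
    (Measure.pi fun _ : Fin c => ν).real {ω | ε ≤ sampleMean f ω - ν[f]}
      ≤ exp (-(c * ε ^ 2) / (2 * ((b - a) / 2) ^ 2)) := by
  have hindep : iIndepFun (fun j (ω : Fin c → Ω) => f (ω j) - ν[f]) (Measure.pi fun _ => ν) :=
    iIndepFun_pi (X := fun _ x => f x - ν[f]) fun _ => hf.sub_const _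
  have hsubG : ∀ j : Fin c, HasSubgaussianMGF (fun ω : Fin c → Ω => f (ω j) - ν[f])
      ((‖b - a‖₊ / 2) ^ 2) (Measure.pi fun _ => ν) := by
    intro j
    refine HasSubgaussianMGF.of_map (Y := fun ω : Fin c → Ω => ω j)
      (X := fun x => f x - ν[f]) (measurable_pi_apply j).aemeasurable ?_
    rw [(measurePreserving_eval _ j).map_eq]
    exact hasSubgaussianMGF_of_mem_Icc hf hab
  have hsum := HasSubgaussianMGF.measure_sum_ge_le_of_iIndepFun hindep (s := univ)
    (fun j _ => hsubG j) (by positivity : 0 ≤ c * ε)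
  simp_rw [sampleMean_sub_const hc]
  convert hsum using 2
  · ext ω
    rw [Set.mem_ofPred_eq, Set.mem_ofPred_eq, one_div, le_inv_mul_iff₀ (by positivity)]
  · simp only [sum_const, card_univ, Fintype.card_fin, nsmul_eq_mul, NNReal.coe_mul,
      NNReal.coe_natCast, NNReal.coe_pow, NNReal.coe_div, coe_nnnorm, norm_eq_abs,
      NNReal.coe_ofNat, div_pow, sq_abs]
    rw [show -((c : ℝ) * ε) ^ 2 = c * -(c * ε ^ 2) by ring, mul_left_comm,
      mul_div_mul_left _ _ (by positivity)]

lemma measureReal_abs_sampleMean_sub_integral_ge_le_exp (hf : AEMeasurable f ν)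
    (hab : ∀ᵐ ω ∂ν, f ω ∈ Set.Icc a b) (hc : 0 < c) (hε : 0 ≤ ε) :
    (Measure.pi fun _ : Fin c => ν).real {ω | ε ≤ |sampleMean f ω - ν[f]|}
      ≤ 2 * exp (-(c * ε ^ 2) / (2 * ((b - a) / 2) ^ 2)) := by
  have hab_neg : ∀ᵐ ω ∂ν, (-f) ω ∈ Set.Icc (-b) (-a) := by
    filter_upwards [hab] with ω ⟨ha, hb⟩ using ⟨neg_le_neg hb, neg_le_neg ha⟩
  have hupper := measureReal_sampleMean_sub_integral_ge_le_exp hf hab hc hε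
  have hlower := measureReal_sampleMean_sub_integral_ge_le_exp hf.neg hab_neg hc hε
  rw [neg_sub_neg] at hlower
  calc _ ≤ (Measure.pi fun _ : Fin c => ν).real ({ω | ε ≤ sampleMean f ω - ν[f]}
          ∪ {ω | ε ≤ sampleMean (-f) ω - ν[-f]}) := by
        refine measureReal_mono fun ω hω => ?_
        rw [Set.mem_ofPred_eq, le_abs'] at hω
        rw [Set.mem_union, Set.mem_ofPred_eq, Set.mem_ofPred_eq, sampleMean_neg, Pi.neg_def,
          integral_neg]
        rcases hω with h | h
        · right; linarith
        · left; exact h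
    _ ≤ _ := (measureReal_union_le _ _).trans (by linarith)

lemma measureReal_abs_sampleMean_sub_integral_ge_le_of_confidenceFactor {B δ : ℝ}
    (hf : AEMeasurable f ν) (hB : ∀ᵐ ω ∂ν, f ω ∈ Set.Icc (-B) B) (hB0 : 0 < B) (hc : 0 < c)
    (hδ0 : 0 < δ) (hδ1 : δ ≤ 1) (hε : confidenceFactor δ / √c * B ≤ ε) :
    (Measure.pi fun _ : Fin c => ν).real {ω | ε ≤ |sampleMean f ω - ν[f]|} ≤ δ := by
  have hη := one_le_confidenceFactor δ
  have hε0 : 0 < ε := lt_of_lt_of_le (by positivity) hε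
  have hcε : confidenceFactor δ ^ 2 * B ^ 2 ≤ c * ε ^ 2 := by
    rw [div_mul_eq_mul_div, div_le_iff₀ (by positivity)] at hε
    have := pow_le_pow_left₀ (by positivity) hε 2
    rwa [mul_pow, mul_pow, sq_sqrt c.cast_nonneg, mul_comm (ε ^ 2)] at this
  have hwidth : ((B - -B) / 2) ^ 2 = B ^ 2 := by ring
  rcases le_or_gt (1 / 2) δ with hδ | hδ
  · calc _ ≤ ((B - -B) / 2) ^ 2 / (c * ε ^ 2) :=
          measureReal_abs_sampleMean_sub_integral_ge_le_div hf hB hc hε0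
      _ ≤ (confidenceFactor δ ^ 2)⁻¹ := by
          rw [hwidth, div_le_iff₀ (by positivity), ← div_eq_inv_mul, le_div_iff₀ (by positivity)]
          linarith
      _ ≤ δ := inv_sq_confidenceFactor_le hδ hδ1
  · calc _ ≤ 2 * exp (-(c * ε ^ 2) / (2 * ((B - -B) / 2) ^ 2)) :=
          measureReal_abs_sampleMean_sub_integral_ge_le_exp hf hB hc hε0.le
      _ ≤ 2 * exp (-(confidenceFactor δ ^ 2 / 2)) := by
          gcongr
          rw [hwidth, neg_div, neg_le_neg_iff, div_le_div_iff₀ two_pos (by positivity)]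
          linarith
      _ ≤ δ := two_mul_exp_neg_sq_confidenceFactor_le hδ0 hδ.le

end SampleMean

lemma one_sub_le_measureReal_abs_sub_le {Ω : Type*} [MeasurableSpace Ω] {μ : Measure Ω}
    [IsProbabilityMeasure μ] {g : Ω → ℝ} {y ε δ : ℝ} (h : μ.real {ω | ε ≤ |g ω - y|} ≤ δ) :
    1 - δ ≤ μ.real {ω | |y - g ω| ≤ ε} := by
  have hcover : {ω | ε ≤ |g ω - y|} ∪ {ω | |y - g ω| ≤ ε} = Set.univ :=
    Set.eq_univ_of_forall fun ω => by
      rw [Set.mem_union, Set.mem_ofPred_eq, Set.mem_ofPred_eq, abs_sub_comm]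
      exact le_total _ _
  have hunion := measureReal_union_le (μ := μ) {ω | ε ≤ |g ω - y|} {ω | |y - g ω| ≤ ε}
  rw [hcover, probReal_univ] at hunion
  linarith

noncomputable def PMF.ofRealWeights {α : Type*} [Fintype α] (w : α → ℝ) (hw : ∀ a, 0 ≤ w a)
    (h1 : ∑ a, w a = 1) : PMF α :=
  PMF.ofFintype (fun a => ENNReal.ofReal (w a)) <| by
    rw [← ENNReal.ofReal_sum_of_nonneg fun a _ => hw a, h1, ENNReal.ofReal_one]

lemma PMF.toReal_ofRealWeights_apply {α : Type*} [Fintype α] {w : α → ℝ} (hw : ∀ a, 0 ≤ w a)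
    (h1 : ∑ a, w a = 1) (a : α) : (PMF.ofRealWeights w hw h1 a).toReal = w a :=
  ENNReal.toReal_ofReal (hw a)

lemma PMF.measureReal_pi_setOf_eq_sum_prod {α ι : Type*} [Fintype α] [MeasurableSpace α]
    [MeasurableSingletonClass α] [Fintype ι] [DecidableEq ι] (p : PMF α)
    (E : (ι → α) → Prop) [DecidablePred E] :
    (Measure.pi fun _ : ι => p.toMeasure).real {t | E t}
      = ∑ t ∈ univ.filter E, ∏ j, (p (t j)).toReal := by
  rw [← coe_filter_univ, ← sum_measureReal_singleton]
  refine sum_congr rfl fun t _ => ?_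
  rw [measureReal_def, Measure.pi_singleton, ENNReal.toReal_prod]
  simp_rw [PMF.toMeasure_apply_singleton p _ (MeasurableSet.singleton _)]

lemma abs_ite_div_le {a p S : ℝ} (hS : 0 ≤ S) (ha : |a| ≤ S * p) :
    |if 0 < p then a / p else 0| ≤ S := by
  split_ifs with hp
  · rwa [abs_div, abs_of_pos hp, div_le_iff₀ hp]
  · simpa using hS

lemma mul_ite_div_eq {a p S : ℝ} (hp : 0 ≤ p) (ha : |a| ≤ S * p) :
    p * (if 0 < p then a / p else 0) = a := by
  split_ifs with hp'
  · field_simp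
  · obtain rfl : p = 0 := le_antisymm (not_lt.1 hp') hp
    rw [mul_zero, abs_nonpos_iff] at ha
    rw [ha, zero_mul]

theorem fmc_high_probability_bound_general
    {n d c : ℕ} (hc : 0 < c)
    (δ : ℝ) (hδ0 : 0 < δ) (hδ1 : δ < 1)
    (η : ℝ) (hη : η = 1 + Real.sqrt (8 * Real.log (1 / δ)))
    (vk vm : Fin n → EuclideanSpace ℝ (Fin d))
    (S : ℝ) (hS : S = ∑ j, ‖vk j‖ * ‖vm j‖) (hSpos : 0 < S)
    (P : Fin n → ℝ) (hP : ∀ t, P t = ‖vk t‖ * ‖vm t‖ / S)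
    (X : Fin n → ℝ)
    (hX : ∀ t, X t = if 0 < P t then (inner ℝ (vk t) (vm t) : ℝ) / P t else 0)
    (Hkm : ℝ) (hH : Hkm = ∑ i, (inner ℝ (vk i) (vm i) : ℝ))
    (est : (Fin c → Fin n) → ℝ)
    (hest : ∀ t, est t = (1 / (c : ℝ)) * ∑ j, X (t j)) :
    1 - δ ≤
      ∑ t ∈ Finset.univ.filter (fun t : Fin c → Fin n =>
          |Hkm - est t| ≤ (η / Real.sqrt c) *
            (Real.sqrt (∑ i, ‖vk i‖ ^ 2) * Real.sqrt (∑ i, ‖vm i‖ ^ 2))),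
        ∏ j, P (t j) := by
  set ε := η / √c * (√(∑ i, ‖vk i‖ ^ 2) * √(∑ i, ‖vm i‖ ^ 2)) with hε_def
  have hPnn : ∀ i, 0 ≤ P i := fun i => by rw [hP]; positivity
  have hPsum : ∑ i, P i = 1 := by simp_rw [hP, ← sum_div, ← hS, div_self hSpos.ne']
  have hinner : ∀ i, |inner ℝ (vk i) (vm i)| ≤ S * P i := fun i => by
    rw [hP, mul_div_cancel₀ _ hSpos.ne']
    exact abs_real_inner_le_norm _ _
  set p := PMF.ofRealWeights P hPnn hPsum
  have hp : ∀ i, (p i).toReal = P i := PMF.toReal_ofRealWeights_apply hPnn hPsum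
  have hmean : ∫ i, X i ∂p.toMeasure = Hkm := by
    simp_rw [PMF.integral_eq_sum, hp, smul_eq_mul, hH, hX]
    exact sum_congr rfl fun i _ => mul_ite_div_eq (hPnn i) (hinner i)
  have hXbd : ∀ i, X i ∈ Set.Icc (-S) S := fun i =>
    abs_le.1 (hX i ▸ abs_ite_div_le hSpos.le (hinner i))
  have hε : confidenceFactor δ / √c * S ≤ ε := by
    rw [confidenceFactor, hε_def, hη, hS]
    gcongr
    exact sum_mul_le_sqrt_mul_sqrt _ _ _
  have htail := measureReal_abs_sampleMean_sub_integral_ge_le_of_confidenceFactor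
    (ν := p.toMeasure) (measurable_of_finite X).aemeasurable (ae_of_all _ hXbd) hSpos hc hδ0
    hδ1.le hε
  rw [hmean, show sampleMean X = est from funext fun t => (hest t).symm] at htail
  simp_rw [← hp, ← PMF.measureReal_pi_setOf_eq_sum_prod]
  exact one_sub_le_measureReal_abs_sub_le htail

/-- High-probability bound for the `c`-sample estimator: with `η = 1 + √(8 log(1/δ))`,
the event `|H_km − H̃_km| ≤ (η/√c) ‖v_k‖ ‖v_m‖` has probability at least `1 − δ` under the
product distribution of `c` i.i.d. samples drawn from `P`. -/
theorem fmc_high_probability_bound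
    {n d c : ℕ} (hn : 0 < n) (hd : 0 < d) (hc : 0 < c)
    (δ : ℝ) (hδ0 : 0 < δ) (hδ1 : δ < 1)
    (η : ℝ) (hη : η = 1 + Real.sqrt (8 * Real.log (1 / δ)))
    (vk vm : Fin n → EuclideanSpace ℝ (Fin d))
    (S : ℝ) (hS : S = ∑ j, ‖vk j‖ * ‖vm j‖) (hSpos : 0 < S)
    (P : Fin n → ℝ) (hP : ∀ t, P t = ‖vk t‖ * ‖vm t‖ / S)
    (X : Fin n → ℝ)
    (hX : ∀ t, X t = if 0 < P t then (inner ℝ (vk t) (vm t) : ℝ) / P t else 0)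
    (Hkm : ℝ) (hH : Hkm = ∑ i, (inner ℝ (vk i) (vm i) : ℝ))
    (est : (Fin c → Fin n) → ℝ)
    (hest : ∀ t, est t = (1 / (c : ℝ)) * ∑ j, X (t j)) :
    1 - δ ≤
      ∑ t ∈ Finset.univ.filter (fun t : Fin c → Fin n =>
          |Hkm - est t| ≤ (η / Real.sqrt c) *
            (Real.sqrt (∑ i, ‖vk i‖ ^ 2) * Real.sqrt (∑ i, ‖vm i‖ ^ 2))),
        ∏ j, P (t j) :=
  fmc_high_probability_bound_general hc δ hδ0 hδ1 η hη vk vm S hS hSpos P hP X hX Hkm hH est hest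
end

section
/- Let δ ∈ (0,1), set η = 1 + √(8 log(1/δ)), let ε > 0, and suppose the number of samples satisfies c ≥ η²/ε². Let t_1,…,t_c be c i.i.d. random indices in {1,…,n}, each distributed according to P, and let H̃_km = (1/c) Σ_{j=1}^c X_{t_j}. Then with probability at least 1 − δ, |H_km − H̃_km| ≤ ε ||v_k|| ||v_m||. -/
open Finset

/-!
Importance sampling makes each draw `X(t)` an unbiased estimate of `H_km` with `|X(t)| ≤ S`, so
the centred draws `X(t_j) - H_km` are bounded by `2S` and have variance at most `S²`. An error
above `ε ‖v_k‖ ‖v_m‖ ≥ ε S` forces `|∑_j (X(t_j) - H_km)| ≥ √c η S`. Chebyshev bounds the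
probability of that by `1/η²`, Hoeffding by `2 exp(-η²/8)`; the first is at most `δ` when
`log(1/δ) ≤ 1`, the second when `log(1/δ) > 1`.
-/

section IidSampling

variable {ι α : Type*} [Fintype ι] [DecidableEq ι] [Fintype α]

def iidExpect (p : α → ℝ) (f : (ι → α) → ℝ) : ℝ :=
  ∑ t, (∏ j, p (t j)) * f t

def iidProb (p : α → ℝ) (E : (ι → α) → Prop) [DecidablePred E] : ℝ :=
  ∑ t ∈ univ.filter E, ∏ j, p (t j)

variable {p : α → ℝ}

theorem sum_prod_eq_one (hp1 : ∑ a, p a = 1) : ∑ t : ι → α, ∏ j, p (t j) = 1 := by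
  rw [← Fintype.prod_sum (fun (_ : ι) a => p a), hp1, prod_const_one]

theorem iidExpect_prod (hp1 : ∑ a, p a = 1) (s : Finset ι) (F : ι → α → ℝ) :
    iidExpect p (fun t => ∏ j ∈ s, F j (t j)) = ∏ j ∈ s, ∑ a, p a * F j a := by
  have hfactor : ∀ t : ι → α, (∏ j, p (t j)) * ∏ j ∈ s, F j (t j)
      = ∏ j, p (t j) * if j ∈ s then F j (t j) else 1 := fun t => by
    rw [prod_mul_distrib, Fintype.prod_ite_mem]
  have hmarginal : ∀ j, (∑ a, p a * if j ∈ s then F j a else 1)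
      = if j ∈ s then ∑ a, p a * F j a else 1 := fun j => by
    split_ifs <;> simp [hp1]
  simp only [iidExpect, hfactor]
  rw [← Fintype.prod_sum (fun j a => p a * if j ∈ s then F j a else 1)]
  simp only [hmarginal, Fintype.prod_ite_mem]

theorem iidExpect_sum (s : Finset ι) (f : ι → (ι → α) → ℝ) :
    iidExpect p (fun t => ∑ j ∈ s, f j t) = ∑ j ∈ s, iidExpect p (f j) := by
  simp only [iidExpect, mul_sum]
  exact sum_comm

theorem iidExpect_sum_sq (hp1 : ∑ a, p a = 1) {Y : α → ℝ} (hY : ∑ a, p a * Y a = 0) :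
    iidExpect p (fun t : ι → α => (∑ j, Y (t j)) ^ 2) = Fintype.card ι * ∑ a, p a * Y a ^ 2 := by
  have hcov : ∀ j j' : ι, iidExpect p (fun t => Y (t j) * Y (t j'))
      = if j = j' then ∑ a, p a * Y a ^ 2 else 0 := by
    intro j j'
    split_ifs with h
    · subst h
      simp only [← sq]
      simpa only [prod_singleton] using iidExpect_prod hp1 {j} (fun _ a => Y a ^ 2)
    · simpa [prod_pair h, hY] using iidExpect_prod hp1 {j, j'} (fun _ a => Y a)
  simp only [sq, sum_mul_sum, iidExpect_sum, hcov, sum_ite_eq, mem_univ, if_true,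
    sum_const, card_univ, nsmul_eq_mul]

theorem iidExpect_exp_sum (hp1 : ∑ a, p a = 1) (Y : α → ℝ) (l : ℝ) :
    iidExpect p (fun t : ι → α => Real.exp (l * ∑ j, Y (t j)))
      = (∑ a, p a * Real.exp (l * Y a)) ^ Fintype.card ι := by
  simp only [mul_sum, Real.exp_sum]
  rw [iidExpect_prod hp1 univ (fun _ a => Real.exp (l * Y a)), prod_const, card_univ]

theorem iidProb_le_iidExpect (hp0 : ∀ a, 0 ≤ p a) {E : (ι → α) → Prop} [DecidablePred E]
    {f : (ι → α) → ℝ} (hf0 : ∀ t, 0 ≤ f t) (hfE : ∀ t, E t → 1 ≤ f t) :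
    iidProb p E ≤ iidExpect p f := by
  have hw : ∀ t : ι → α, 0 ≤ ∏ j, p (t j) := fun t => prod_nonneg fun j _ => hp0 (t j)
  calc iidProb p E ≤ ∑ t ∈ univ.filter E, (∏ j, p (t j)) * f t :=
        sum_le_sum fun t ht => le_mul_of_one_le_right (hw t) (hfE t (mem_filter.mp ht).2)
    _ ≤ iidExpect p f :=
        sum_le_sum_of_subset_of_nonneg (filter_subset _ _)
          fun t _ _ => mul_nonneg (hw t) (hf0 t)

theorem iidProb_le_of_imp (hp0 : ∀ a, 0 ≤ p a) {E F : (ι → α) → Prop} [DecidablePred E]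
    [DecidablePred F] (h : ∀ t, E t → F t) : iidProb p E ≤ iidProb p F :=
  sum_le_sum_of_subset_of_nonneg (monotone_filter_right _ fun t _ => h t)
    fun t _ _ => prod_nonneg fun j _ => hp0 (t j)

theorem iidProb_or_le (hp0 : ∀ a, 0 ≤ p a) (E F : (ι → α) → Prop) [DecidablePred E]
    [DecidablePred F] : iidProb p (fun t => E t ∨ F t) ≤ iidProb p E + iidProb p F := by
  classical
  have hw : ∀ t : ι → α, 0 ≤ ∏ j, p (t j) := fun t => prod_nonneg fun j _ => hp0 (t j)
  simp only [iidProb, filter_or]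
  linarith [sum_union_inter (s₁ := univ.filter E) (s₂ := univ.filter F)
    (f := fun t => ∏ j, p (t j)),
    sum_nonneg fun t (_ : t ∈ univ.filter E ∩ univ.filter F) => hw t]

theorem one_sub_iidProb_not (hp1 : ∑ a, p a = 1) (E : (ι → α) → Prop) [DecidablePred E] :
    1 - iidProb p (fun t => ¬ E t) = iidProb p E := by
  rw [← sum_prod_eq_one (ι := ι) hp1, iidProb, iidProb,
    ← sum_filter_add_sum_filter_not univ E]
  ring

theorem iidProb_abs_sum_ge_le (hp0 : ∀ a, 0 ≤ p a) (hp1 : ∑ a, p a = 1) {Y : α → ℝ}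
    (hY : ∑ a, p a * Y a = 0) {r : ℝ} (hr : 0 < r) :
    iidProb p (fun t : ι → α => r ≤ |∑ j, Y (t j)|)
      ≤ Fintype.card ι * (∑ a, p a * Y a ^ 2) / r ^ 2 := by
  calc iidProb p (fun t : ι → α => r ≤ |∑ j, Y (t j)|)
      ≤ iidExpect p (fun t => (∑ j, Y (t j)) ^ 2 / r ^ 2) := by
        refine iidProb_le_iidExpect hp0 (fun t => by positivity) fun t ht => ?_
        rw [one_le_div (by positivity), ← sq_abs (∑ j, Y (t j))]
        exact pow_le_pow_left₀ hr.le ht 2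
    _ = Fintype.card ι * (∑ a, p a * Y a ^ 2) / r ^ 2 := by
        simp only [iidExpect, mul_div_assoc', ← sum_div]
        rw [← iidExpect, iidExpect_sum_sq hp1 hY]

theorem sum_mul_exp_le_exp_sq (hp0 : ∀ a, 0 ≤ p a) (hp1 : ∑ a, p a = 1) {Y : α → ℝ}
    (hY : ∑ a, p a * Y a = 0) {b : ℝ} (hb : 0 < b) (hYb : ∀ a, |Y a| ≤ b) (l : ℝ) :
    ∑ a, p a * Real.exp (l * Y a) ≤ Real.exp ((l * b) ^ 2 / 2) := by
  -- convexity of `exp` on `[-l b, l b]` bounds it by the chord `cosh (l b) + (Y / b) sinh (l b)`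
  have hchord : ∀ a, Real.exp (l * Y a) ≤ Real.cosh (l * b) + Y a / b * Real.sinh (l * b) := by
    intro a
    have hYb' : |Y a / b| ≤ 1 := by rw [abs_div, abs_of_pos hb, div_le_one hb]; exact hYb a
    convert Real.exp_mul_le_cosh_add_mul_sinh hYb' (l * b) using 2
    field_simp
  calc ∑ a, p a * Real.exp (l * Y a)
      ≤ ∑ a, (Real.cosh (l * b) * p a + Real.sinh (l * b) / b * (p a * Y a)) :=
        sum_le_sum fun a _ => (mul_le_mul_of_nonneg_left (hchord a) (hp0 a)).trans_eq (by ring)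
    _ = Real.cosh (l * b) := by rw [sum_add_distrib, ← mul_sum, ← mul_sum, hp1, hY]; ring
    _ ≤ Real.exp ((l * b) ^ 2 / 2) := Real.cosh_le_exp_half_sq _

theorem iidProb_sum_ge_le_exp (hp0 : ∀ a, 0 ≤ p a) (hp1 : ∑ a, p a = 1) {Y : α → ℝ}
    (hY : ∑ a, p a * Y a = 0) {b : ℝ} (hb : 0 < b) (hYb : ∀ a, |Y a| ≤ b) {l : ℝ}
    (hl : 0 ≤ l) (r : ℝ) :
    iidProb p (fun t : ι → α => r ≤ ∑ j, Y (t j))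
      ≤ Real.exp (Fintype.card ι * (l * b) ^ 2 / 2 - l * r) := by
  calc iidProb p (fun t : ι → α => r ≤ ∑ j, Y (t j))
      ≤ iidExpect p (fun t => Real.exp (-(l * r)) * Real.exp (l * ∑ j, Y (t j))) := by
        refine iidProb_le_iidExpect hp0 (fun t => by positivity) fun t ht => ?_
        rw [← Real.exp_add, Real.one_le_exp_iff]
        nlinarith
    _ = Real.exp (-(l * r)) * (∑ a, p a * Real.exp (l * Y a)) ^ Fintype.card ι := by
        rw [← iidExpect_exp_sum hp1, iidExpect, iidExpect, mul_sum]
        exact sum_congr rfl fun t _ => by ring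
    _ ≤ Real.exp (-(l * r)) * Real.exp ((l * b) ^ 2 / 2) ^ Fintype.card ι := by
        gcongr
        · exact sum_nonneg fun a _ => mul_nonneg (hp0 a) (Real.exp_pos _).le
        · exact sum_mul_exp_le_exp_sq hp0 hp1 hY hb hYb l
    _ = Real.exp (Fintype.card ι * (l * b) ^ 2 / 2 - l * r) := by
        rw [← Real.exp_nat_mul, ← Real.exp_add]
        ring_nf

theorem iidProb_abs_sum_ge_le_exp (hp0 : ∀ a, 0 ≤ p a) (hp1 : ∑ a, p a = 1) {Y : α → ℝ}
    (hY : ∑ a, p a * Y a = 0) {b : ℝ} (hb : 0 < b) (hYb : ∀ a, |Y a| ≤ b) {r : ℝ}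
    (hr : 0 ≤ r) :
    iidProb p (fun t : ι → α => r ≤ |∑ j, Y (t j)|)
      ≤ 2 * Real.exp (-(r ^ 2 / (2 * Fintype.card ι * b ^ 2))) := by
  -- the minimiser of the Chernoff exponent `c (l b)² / 2 - l r`
  set l := r / (Fintype.card ι * b ^ 2)
  have hl : 0 ≤ l := by positivity
  have hexponent : Fintype.card ι * (l * b) ^ 2 / 2 - l * r
      = -(r ^ 2 / (2 * Fintype.card ι * b ^ 2)) := by
    rcases (Nat.cast_nonneg (α := ℝ) (Fintype.card ι)).eq_or_lt with hc | hc
    · simp [l, ← hc]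
    · simp only [l]; field_simp; ring
  have hYneg : ∑ a, p a * -Y a = 0 := by simp [hY]
  have hYbneg : ∀ a, |-Y a| ≤ b := fun a => (abs_neg (Y a)).symm ▸ hYb a
  calc iidProb p (fun t : ι → α => r ≤ |∑ j, Y (t j)|)
      ≤ iidProb p (fun t : ι → α => r ≤ ∑ j, Y (t j) ∨ r ≤ ∑ j, -Y (t j)) :=
        iidProb_le_of_imp hp0 fun t ht => by
          rw [sum_neg_distrib]; rcases le_abs'.mp ht with h | h <;> [right; left] <;> linarith
    _ ≤ _ := iidProb_or_le hp0 _ _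
    _ ≤ 2 * Real.exp (-(r ^ 2 / (2 * Fintype.card ι * b ^ 2))) := by
        have h₁ := iidProb_sum_ge_le_exp (ι := ι) hp0 hp1 hY hb hYb hl r
        have h₂ := iidProb_sum_ge_le_exp (ι := ι) hp0 hp1 hYneg hb hYbneg hl r
        rw [hexponent] at h₁ h₂
        linarith

theorem sum_mul_sub_mean_eq_zero (hp1 : ∑ a, p a = 1) (X : α → ℝ) :
    ∑ a, p a * (X a - ∑ b, p b * X b) = 0 := by
  simp only [mul_sub, sum_sub_distrib, ← sum_mul, hp1, one_mul, sub_self]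

theorem abs_sum_mul_le (hp0 : ∀ a, 0 ≤ p a) (hp1 : ∑ a, p a = 1) {X : α → ℝ} {S : ℝ}
    (hXS : ∀ a, |X a| ≤ S) : |∑ a, p a * X a| ≤ S :=
  calc |∑ a, p a * X a| ≤ ∑ a, p a * S :=
        (abs_sum_le_sum_abs _ _).trans <| sum_le_sum fun a _ => by
          rw [abs_mul, abs_of_nonneg (hp0 a)]; exact mul_le_mul_of_nonneg_left (hXS a) (hp0 a)
    _ = S := by rw [← sum_mul, hp1, one_mul]

theorem sum_mul_sub_mean_sq_le (hp0 : ∀ a, 0 ≤ p a) (hp1 : ∑ a, p a = 1) {X : α → ℝ} {S : ℝ}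
    (hXS : ∀ a, |X a| ≤ S) : ∑ a, p a * (X a - ∑ b, p b * X b) ^ 2 ≤ S ^ 2 := by
  set μ := ∑ b, p b * X b
  have hvariance : ∑ a, p a * (X a - μ) ^ 2 = ∑ a, p a * X a ^ 2 - μ ^ 2 := by
    have hexpand : ∀ a,
        p a * (X a - μ) ^ 2 = p a * X a ^ 2 - 2 * μ * (p a * X a) + μ ^ 2 * p a :=
      fun a => by ring
    simp only [hexpand, sum_add_distrib, sum_sub_distrib, ← mul_sum, hp1]
    ring
  have hsecond : ∑ a, p a * X a ^ 2 ≤ S ^ 2 := by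
    refine (le_abs_self _).trans (abs_sum_mul_le hp0 hp1 fun a => ?_)
    rw [abs_pow]
    exact pow_le_pow_left₀ (abs_nonneg _) (hXS a) 2
  nlinarith [sq_nonneg μ]

theorem iidProb_abs_sum_sub_mean_ge_le_min [Nonempty ι] (hp0 : ∀ a, 0 ≤ p a) (hp1 : ∑ a, p a = 1)
    {X : α → ℝ} {S η : ℝ} (hS : 0 < S) (hXS : ∀ a, |X a| ≤ S) (hη : 0 < η) :
    iidProb p (fun t : ι → α =>
        √(Fintype.card ι) * η * S ≤ |∑ j, (X (t j) - ∑ a, p a * X a)|)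
      ≤ min (η ^ 2)⁻¹ (2 * Real.exp (-(η ^ 2 / 8))) := by
  have hc : (0 : ℝ) < Fintype.card ι := by exact_mod_cast Fintype.card_pos
  have hr : (√(Fintype.card ι) * η * S) ^ 2 = Fintype.card ι * η ^ 2 * S ^ 2 := by
    rw [mul_pow, mul_pow, Real.sq_sqrt hc.le]
  have hY := sum_mul_sub_mean_eq_zero hp1 X
  refine le_min ?_ ?_
  · calc _ ≤ Fintype.card ι * (∑ a, p a * (X a - ∑ b, p b * X b) ^ 2)
            / (√(Fintype.card ι) * η * S) ^ 2 :=
          iidProb_abs_sum_ge_le hp0 hp1 hY (by positivity)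
      _ ≤ Fintype.card ι * S ^ 2 / (√(Fintype.card ι) * η * S) ^ 2 := by
          gcongr; exact sum_mul_sub_mean_sq_le hp0 hp1 hXS
      _ = (η ^ 2)⁻¹ := by rw [hr]; field_simp
  · have hYb : ∀ a, |X a - ∑ b, p b * X b| ≤ 2 * S := fun a =>
      (abs_sub _ _).trans (by linarith [hXS a, abs_sum_mul_le hp0 hp1 hXS])
    calc _ ≤ 2 * Real.exp
            (-((√(Fintype.card ι) * η * S) ^ 2 / (2 * Fintype.card ι * (2 * S) ^ 2))) :=
          iidProb_abs_sum_ge_le_exp hp0 hp1 hY (by positivity) hYb (by positivity)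
      _ = 2 * Real.exp (-(η ^ 2 / 8)) := by rw [hr]; field_simp; ring_nf

end IidSampling

section ImportanceSampling

variable {α : Type*} {a m P X : α → ℝ} {S : ℝ}

theorem importance_weight_nonneg (hm : ∀ i, |a i| ≤ m i) (hS : 0 ≤ S)
    (hP : ∀ i, P i = m i / S) (i : α) : 0 ≤ P i :=
  hP i ▸ div_nonneg ((abs_nonneg _).trans (hm i)) hS

theorem sum_importance_weight [Fintype α] (hS : S = ∑ i, m i) (hSpos : 0 < S)
    (hP : ∀ i, P i = m i / S) : ∑ i, P i = 1 := by
  simp only [hP, ← sum_div, ← hS, div_self hSpos.ne']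

theorem importance_weight_mul_estimate (hm : ∀ i, |a i| ≤ m i) (hSpos : 0 < S)
    (hP : ∀ i, P i = m i / S) (hX : ∀ i, X i = if 0 < P i then a i / P i else 0) (i : α) :
    P i * X i = a i := by
  rw [hX]
  split_ifs with h
  · exact mul_div_cancel₀ _ h.ne'
  · have hm0 : m i ≤ 0 := by
      rwa [hP, not_lt, div_le_iff₀ hSpos, zero_mul] at h
    rw [mul_zero, eq_comm, ← abs_nonpos_iff]
    exact (hm i).trans hm0

theorem abs_importance_estimate_le (hm : ∀ i, |a i| ≤ m i) (hSpos : 0 < S)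
    (hP : ∀ i, P i = m i / S) (hX : ∀ i, X i = if 0 < P i then a i / P i else 0) (i : α) :
    |X i| ≤ S := by
  rw [hX]
  split_ifs with h
  · rw [abs_div, abs_of_pos h, div_le_iff₀ h, hP, mul_div_cancel₀ _ hSpos.ne']
    exact hm i
  · simpa using hSpos.le

end ImportanceSampling

theorem min_inv_sq_two_mul_exp_le {δ η : ℝ} (hδ0 : 0 < δ) (hδ1 : δ < 1)
    (hη : η = 1 + √(8 * Real.log (1 / δ))) :
    min (η ^ 2)⁻¹ (2 * Real.exp (-(η ^ 2 / 8))) ≤ δ := by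
  set L := Real.log (1 / δ)
  have hL : 0 < L := Real.log_pos (one_lt_one_div hδ0 hδ1)
  have hδL : δ = Real.exp (-L) := by
    simp only [L, one_div, Real.log_inv, neg_neg, Real.exp_log hδ0]
  set u := √(8 * L)
  have hu0 : 0 ≤ u := Real.sqrt_nonneg _
  have hu2 : u ^ 2 = 8 * L := Real.sq_sqrt (by positivity)
  have hη2 : η ^ 2 = 1 + 2 * u + 8 * L := by rw [hη]; linear_combination hu2
  rw [hδL]
  rcases le_or_gt L 1 with hL1 | hL1
  · -- Chebyshev regime: `exp L ≤ 1 + 2 L ≤ η²` on `[0, 1]`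
    refine min_le_of_left_le ?_
    have hexp : Real.exp L ≤ 1 + 2 * L := by
      have := Real.exp_bound' hL.le hL1 (n := 1) one_pos
      norm_num at this
      linarith
    rw [Real.exp_neg]
    exact inv_anti₀ (Real.exp_pos L) (by nlinarith)
  · -- Hoeffding regime: `u > √8` makes `η² / 8 - L = 1/8 + u/4` exceed `log 2`
    refine min_le_of_right_le ?_
    have hu : (23 : ℝ) / 10 < u := by nlinarith
    have hlog2 := Real.log_two_lt_d9
    rw [← Real.exp_log two_pos, ← Real.exp_add, Real.exp_le_exp]
    nlinarith

theorem sqrt_mul_le_abs_sum_sub_of_lt {c : ℕ} {x : Fin c → ℝ} {μ η ε S : ℝ}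
    (hcε : η ^ 2 / ε ^ 2 ≤ c) (hε : 0 < ε) (hS : 0 ≤ S)
    (hdev : ε * S < |μ - 1 / (c : ℝ) * ∑ j, x j|) :
    √c * η * S ≤ |∑ j, (x j - μ)| := by
  rcases Nat.eq_zero_or_pos c with rfl | hc
  · simp
  have hc : (0 : ℝ) < c := by exact_mod_cast hc
  have hηc : η ≤ √c * ε := by
    rw [← div_le_iff₀ hε]
    exact Real.le_sqrt_of_sq_le (by rwa [div_pow])
  have hsum : ∑ j, (x j - μ) = c * (1 / (c : ℝ) * ∑ j, x j - μ) := by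
    rw [sum_sub_distrib, sum_const, card_univ, Fintype.card_fin, nsmul_eq_mul]
    field_simp
  rw [hsum, abs_mul, abs_sub_comm, Nat.abs_cast]
  calc √c * η * S ≤ √c * (√c * ε) * S := by gcongr
    _ = c * (ε * S) := by rw [← mul_assoc, Real.mul_self_sqrt hc.le]; ring
    _ ≤ c * |μ - 1 / (c : ℝ) * ∑ j, x j| := by gcongr

theorem fmc_high_probability_bound_eps_general
    {n d c : ℕ}
    (δ : ℝ) (hδ0 : 0 < δ) (hδ1 : δ < 1)
    (η : ℝ) (hη : η = 1 + Real.sqrt (8 * Real.log (1 / δ)))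
    (ε : ℝ) (hε : 0 < ε) (hcε : η ^ 2 / ε ^ 2 ≤ (c : ℝ))
    (vk vm : Fin n → EuclideanSpace ℝ (Fin d))
    (S : ℝ) (hS : S = ∑ j, ‖vk j‖ * ‖vm j‖) (hSpos : 0 < S)
    (P : Fin n → ℝ) (hP : ∀ t, P t = ‖vk t‖ * ‖vm t‖ / S)
    (X : Fin n → ℝ)
    (hX : ∀ t, X t = if 0 < P t then (inner ℝ (vk t) (vm t) : ℝ) / P t else 0)
    (Hkm : ℝ) (hH : Hkm = ∑ i, (inner ℝ (vk i) (vm i) : ℝ))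
    (est : (Fin c → Fin n) → ℝ)
    (hest : ∀ t, est t = (1 / (c : ℝ)) * ∑ j, X (t j)) :
    1 - δ ≤
      ∑ t ∈ Finset.univ.filter (fun t : Fin c → Fin n =>
          |Hkm - est t| ≤ ε *
            (Real.sqrt (∑ i, ‖vk i‖ ^ 2) * Real.sqrt (∑ i, ‖vm i‖ ^ 2))),
        ∏ j, P (t j) := by
  set R := √(∑ i, ‖vk i‖ ^ 2) * √(∑ i, ‖vm i‖ ^ 2)
  have hm : ∀ i, |inner ℝ (vk i) (vm i)| ≤ ‖vk i‖ * ‖vm i‖ := fun i => abs_real_inner_le_norm _ _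
  have hP0 := importance_weight_nonneg hm hSpos.le hP
  have hP1 := sum_importance_weight hS hSpos hP
  have hmean : ∑ i, P i * X i = Hkm := by
    simp only [importance_weight_mul_estimate hm hSpos hP hX, hH]
  have hη0 : 0 < η := by rw [hη]; positivity
  have hc : (0 : ℝ) < c := (by positivity : (0 : ℝ) < η ^ 2 / ε ^ 2).trans_le hcε
  have : Nonempty (Fin c) := ⟨⟨0, by exact_mod_cast hc⟩⟩
  have hbad : ∀ t : Fin c → Fin n, ¬ |Hkm - est t| ≤ ε * R →
      √(Fintype.card (Fin c)) * η * S ≤ |∑ j, (X (t j) - ∑ i, P i * X i)| := fun t ht => by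
    have hSR : S ≤ R := hS ▸ Real.sum_mul_le_sqrt_mul_sqrt _ _ _
    rw [hmean, Fintype.card_fin]
    refine sqrt_mul_le_abs_sum_sub_of_lt hcε hε hSpos.le ?_
    rw [← hest]
    exact (mul_le_mul_of_nonneg_left hSR hε.le).trans_lt (not_le.mp ht)
  calc 1 - δ ≤ 1 - min (η ^ 2)⁻¹ (2 * Real.exp (-(η ^ 2 / 8))) := by
        linarith [min_inv_sq_two_mul_exp_le hδ0 hδ1 hη]
    _ ≤ 1 - iidProb P (fun t : Fin c → Fin n => ¬ |Hkm - est t| ≤ ε * R) := by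
        gcongr
        exact (iidProb_le_of_imp hP0 hbad).trans <| iidProb_abs_sum_sub_mean_ge_le_min hP0 hP1
          hSpos (abs_importance_estimate_le hm hSpos hP hX) hη0
    _ = _ := one_sub_iidProb_not hP1 _

/-- High-probability bound for the `c`-sample estimator: with `η = 1 + √(8 log(1/δ))` and
`c ≥ η²/ε²` samples, the event `|H_km − H̃_km| ≤ ε ‖v_k‖ ‖v_m‖` has probability at least
`1 − δ` under the product distribution of `c` i.i.d. samples drawn from `P`. -/
theorem fmc_high_probability_bound_eps
    {n d c : ℕ} (hn : 0 < n) (hd : 0 < d) (hc : 0 < c)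
    (δ : ℝ) (hδ0 : 0 < δ) (hδ1 : δ < 1)
    (η : ℝ) (hη : η = 1 + Real.sqrt (8 * Real.log (1 / δ)))
    (ε : ℝ) (hε : 0 < ε) (hcε : η ^ 2 / ε ^ 2 ≤ (c : ℝ))
    (vk vm : Fin n → EuclideanSpace ℝ (Fin d))
    (S : ℝ) (hS : S = ∑ j, ‖vk j‖ * ‖vm j‖) (hSpos : 0 < S)
    (P : Fin n → ℝ) (hP : ∀ t, P t = ‖vk t‖ * ‖vm t‖ / S)
    (X : Fin n → ℝ)
    (hX : ∀ t, X t = if 0 < P t then (inner ℝ (vk t) (vm t) : ℝ) / P t else 0)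
    (Hkm : ℝ) (hH : Hkm = ∑ i, (inner ℝ (vk i) (vm i) : ℝ))
    (est : (Fin c → Fin n) → ℝ)
    (hest : ∀ t, est t = (1 / (c : ℝ)) * ∑ j, X (t j)) :
    1 - δ ≤
      ∑ t ∈ Finset.univ.filter (fun t : Fin c → Fin n =>
          |Hkm - est t| ≤ ε *
            (Real.sqrt (∑ i, ‖vk i‖ ^ 2) * Real.sqrt (∑ i, ‖vm i‖ ^ 2))),
        ∏ j, P (t j) :=
  fmc_high_probability_bound_eps_general δ hδ0 hδ1 η hη ε hε hcε vk vm S hS hSpos P hP X hX Hkm hH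
    est hest
end
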